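/- Let (A,{·,·},μ,α,β) be a BiHom-Poisson algebra in which α and β are surjective. If D₁ belongs to the (α^k,β^l)-centroid of A and D₂ belongs to the (α^{k'},β^{l'})-quasicentroid of A, then [D₁,D₂](x) = D₁(D₂(x)) − D₂(D₁(x)) lies in the centralizer Z(A) = {x ∈ A : {x,y} = 0 and μ(x,y) = 0 for all y ∈ A} for every x ∈ A. In particular, if Z(A) = {0} then [D₁,D₂] = 0. -/
import Mathlib


/-- A BiHom-Poisson algebra structure on a `K`-vector space `A` (K a field of
characteristic 0), given by bilinear maps `br` (the bracket `{·,·}`) and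
`mul` (the product `μ`) and commuting linear maps `α`, `β` that are
multiplicative with respect to both operations. -/
structure IsBiHomPoisson {K A : Type*} [Field K] [CharZero K]
    [AddCommGroup A] [Module K A]
    (br mul : A →ₗ[K] A →ₗ[K] A) (α β : A →ₗ[K] A) : Prop where
  comm_maps : ∀ x, α (β x) = β (α x)
  map_mul_alpha : ∀ x y, α (mul x y) = mul (α x) (α y)
  map_mul_beta : ∀ x y, β (mul x y) = mul (β x) (β y)
  map_br_alpha : ∀ x y, α (br x y) = br (α x) (α y)
  map_br_beta : ∀ x y, β (br x y) = br (β x) (β y)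
  assoc : ∀ x y z, mul (mul x y) (β z) = mul (α x) (mul y z)
  mul_comm : ∀ x y, mul (β x) (α y) = mul (β y) (α x)
  skew : ∀ x y, br (β x) (α y) = - br (β y) (α x)
  jacobi : ∀ x y z,
    br (β (β x)) (br (β y) (α z)) + br (β (β y)) (br (β z) (α x))
      + br (β (β z)) (br (β x) (α y)) = 0
  leibniz : ∀ x y z,
    br (α (β x)) (mul y z) = mul (br (β x) y) (β z) + mul (β y) (br (α x) z)

/-- Membership in the `(α^k, β^l)`-centroid of a BiHom-Poisson algebra. -/
def IsBHCentroid {K A : Type*} [Field K] [CharZero K]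
    [AddCommGroup A] [Module K A]
    (br mul : A →ₗ[K] A →ₗ[K] A) (α β : A →ₗ[K] A) (k l : ℕ)
    (D : A →ₗ[K] A) : Prop :=
  (∀ x, D (α x) = α (D x)) ∧ (∀ x, D (β x) = β (D x)) ∧
  (∀ x y, br (D x) ((α ^ k) ((β ^ l) y)) = br ((α ^ k) ((β ^ l) x)) (D y)) ∧
  (∀ x y, br (D x) ((α ^ k) ((β ^ l) y)) = D (br x y)) ∧
  (∀ x y, mul (D x) ((α ^ k) ((β ^ l) y)) = mul ((α ^ k) ((β ^ l) x)) (D y)) ∧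
  (∀ x y, mul (D x) ((α ^ k) ((β ^ l) y)) = D (mul x y))

/-- Membership in the `(α^k, β^l)`-quasicentroid of a BiHom-Poisson algebra. -/
def IsBHQuasiCentroid {K A : Type*} [Field K] [CharZero K]
    [AddCommGroup A] [Module K A]
    (br mul : A →ₗ[K] A →ₗ[K] A) (α β : A →ₗ[K] A) (k l : ℕ)
    (D : A →ₗ[K] A) : Prop :=
  (∀ x, D (α x) = α (D x)) ∧ (∀ x, D (β x) = β (D x)) ∧
  (∀ x y, br (D x) ((α ^ k) ((β ^ l) y)) = br ((α ^ k) ((β ^ l) x)) (D y)) ∧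
  (∀ x y, mul (D x) ((α ^ k) ((β ^ l) y)) = mul ((α ^ k) ((β ^ l) x)) (D y))

lemma bh_comm_pow {K A : Type*} [Field K] [AddCommGroup A] [Module K A]
    (f g : A →ₗ[K] A) (h : ∀ x, f (g x) = g (f x)) :
    ∀ (n : ℕ) (x : A), f ((g ^ n) x) = (g ^ n) (f x) := by
  intro n
  induction n with
  | zero => intro x; simp
  | succ n ih =>
    intro x
    have h1 : ∀ y : A, (g ^ (n + 1)) y = (g ^ n) (g y) := fun y => by
      rw [pow_succ]; rfl
    rw [h1, h1, ih, h]

lemma bh_comm_pow_pow {K A : Type*} [Field K] [AddCommGroup A] [Module K A]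
    (f g : A →ₗ[K] A) (h : ∀ x, f (g x) = g (f x)) (m n : ℕ) (x : A) :
    (f ^ m) ((g ^ n) x) = (g ^ n) ((f ^ m) x) :=
  (bh_comm_pow (g ^ n) f (fun x => (bh_comm_pow f g h n x).symm) m x).symm

lemma bh_surj_pow {K A : Type*} [Field K] [AddCommGroup A] [Module K A]
    (f : A →ₗ[K] A) (hf : Function.Surjective f) (n : ℕ) :
    Function.Surjective ⇑(f ^ n) := by
  induction n with
  | zero => intro y; exact ⟨y, by simp⟩
  | succ n ih =>
    intro y
    obtain ⟨z, hz⟩ := ih y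
    obtain ⟨w, hw⟩ := hf z
    refine ⟨w, ?_⟩
    have h1 : (f ^ (n + 1)) w = (f ^ n) (f w) := by rw [pow_succ]; rfl
    rw [h1, hw, hz]

/-- For surjective `α`, `β`, the commutator of a centroid element with a
quasicentroid element takes values in the centralizer; if the centralizer is
trivial the commutator vanishes. -/
theorem bhCentroid_quasiCentroid_bracket {K A : Type*} [Field K] [CharZero K]
    [AddCommGroup A] [Module K A]
    (br mul : A →ₗ[K] A →ₗ[K] A) (α β : A →ₗ[K] A)
    (h : IsBiHomPoisson br mul α β)
    (hα : Function.Surjective α) (hβ : Function.Surjective β)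
    (k l k' l' : ℕ) (D₁ D₂ : A →ₗ[K] A)
    (hD₁ : IsBHCentroid br mul α β k l D₁)
    (hD₂ : IsBHQuasiCentroid br mul α β k' l' D₂) :
    (∀ x y, br (D₁ (D₂ x) - D₂ (D₁ x)) y = 0 ∧
      mul (D₁ (D₂ x) - D₂ (D₁ x)) y = 0) ∧
    ((∀ z : A, (∀ y, br z y = 0 ∧ mul z y = 0) → z = 0) →
      ∀ x, D₁ (D₂ x) - D₂ (D₁ x) = 0) := by
  obtain ⟨hD₁α, hD₁β, hD₁br, hD₁brD, hD₁mul, hD₁mulD⟩ := hD₁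
  obtain ⟨hD₂α, hD₂β, hD₂br, hD₂mul⟩ := hD₂
  have hab : ∀ x, α (β x) = β (α x) := h.comm_maps
  have hba : ∀ x, β (α x) = α (β x) := fun x => (hab x).symm
  -- commutation of powers
  have cαα := bh_comm_pow_pow α α (fun _ => rfl)
  have cββ := bh_comm_pow_pow β β (fun _ => rfl)
  have cαβ := bh_comm_pow_pow α β hab
  have cβα := bh_comm_pow_pow β α hba
  -- D₁, D₂ commute with powers of α, β
  have cD₁α := bh_comm_pow D₁ α hD₁α
  have cD₁β := bh_comm_pow D₁ β hD₁β
  have cD₂α := bh_comm_pow D₂ α hD₂α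
  have cD₂β := bh_comm_pow D₂ β hD₂β
  -- rearrangement: E (F z) = F (E z)
  have rearr : ∀ z : A,
      (α ^ k) ((β ^ l) ((α ^ k') ((β ^ l') z))) =
      (α ^ k') ((β ^ l') ((α ^ k) ((β ^ l) z))) := by
    intro z
    rw [cβα l k', cαα k k', cββ l l', cαβ k l']
  have key : ∀ x y, br (D₁ (D₂ x) - D₂ (D₁ x)) y = 0 ∧
      mul (D₁ (D₂ x) - D₂ (D₁ x)) y = 0 := by
    intro x y
    obtain ⟨a, ha⟩ := bh_surj_pow α hα k y
    obtain ⟨b, hb⟩ := bh_surj_pow β hβ l a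
    obtain ⟨c, hc⟩ := bh_surj_pow α hα k' b
    obtain ⟨z, hz⟩ := bh_surj_pow β hβ l' c
    have hy : (α ^ k) ((β ^ l) ((α ^ k') ((β ^ l') z))) = y := by
      rw [hz, hc, hb, ha]
    have e1 : br (D₁ (D₂ x)) y =
        D₁ (br ((α ^ k') ((β ^ l') x)) (D₂ z)) := by
      rw [← hy, hD₁brD (D₂ x) ((α ^ k') ((β ^ l') z)), hD₂br x z]
    have e2 : br (D₂ (D₁ x)) y =
        D₁ (br ((α ^ k') ((β ^ l') x)) (D₂ z)) := by
      rw [← hy, rearr, hD₂br (D₁ x) ((α ^ k) ((β ^ l) z)),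
        cD₂α k ((β ^ l) z), cD₂β l z,
        ← cD₁β l' x, ← cD₁α k' ((β ^ l') x),
        hD₁brD ((α ^ k') ((β ^ l') x)) (D₂ z)]
    have m1 : mul (D₁ (D₂ x)) y =
        D₁ (mul ((α ^ k') ((β ^ l') x)) (D₂ z)) := by
      rw [← hy, hD₁mulD (D₂ x) ((α ^ k') ((β ^ l') z)), hD₂mul x z]
    have m2 : mul (D₂ (D₁ x)) y =
        D₁ (mul ((α ^ k') ((β ^ l') x)) (D₂ z)) := by
      rw [← hy, rearr, hD₂mul (D₁ x) ((α ^ k) ((β ^ l) z)),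
        cD₂α k ((β ^ l) z), cD₂β l z,
        ← cD₁β l' x, ← cD₁α k' ((β ^ l') x),
        hD₁mulD ((α ^ k') ((β ^ l') x)) (D₂ z)]
    constructor
    · rw [map_sub, LinearMap.sub_apply, e1, e2, sub_self]
    · rw [map_sub, LinearMap.sub_apply, m1, m2, sub_self]
  exact ⟨key, fun hZ x => hZ _ (key x)⟩
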